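/- arXiv:2603.09797 — 5 statements merged into one kernel-verified Lean document; each statement's English description precedes it below -/
import Mathlib

section
/- For every finite simple graph G, the critical difference equals the critical independence difference: max over all subsets X of V(G) of (|X| - |N(X)|) equals max over all independent subsets X of V(G) of (|X| - |N(X)|). -/
open SimpleGraph

universe u

variable {V : Type u}

/-- `S` is an independent set of `G`. -/
def IsIndep (G : SimpleGraph V) (S : Set V) : Prop :=
  ∀ ⦃u⦄, u ∈ S → ∀ ⦃v⦄, v ∈ S → ¬ G.Adj u v

/-- The neighborhood `N(S)` of a vertex set. -/
def NSet (G : SimpleGraph V) (S : Set V) : Set V := {v | ∃ u ∈ S, G.Adj u v}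

/-- `S` is a maximum independent set of `G`. -/
def IsMaxIndep (G : SimpleGraph V) (S : Set V) : Prop :=
  IsIndep G S ∧ ∀ T : Set V, IsIndep G T → T.ncard ≤ S.ncard

/-- The independence number `α(G)`. -/
noncomputable def indepNum (G : SimpleGraph V) : ℕ :=
  sSup {n | ∃ S : Set V, IsIndep G S ∧ S.ncard = n}

/-- `core(G)`: intersection of all maximum independent sets. -/
def core (G : SimpleGraph V) : Set V := ⋂₀ {S | IsMaxIndep G S}

/-- `corona(G)`: union of all maximum independent sets. -/
def corona (G : SimpleGraph V) : Set V := ⋃₀ {S | IsMaxIndep G S}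

/-- The difference `d_G(S) = |S| - |N(S)|`, as an integer. -/
noncomputable def diffZ (G : SimpleGraph V) (S : Set V) : ℤ :=
  (S.ncard : ℤ) - ((NSet G S).ncard : ℤ)

/-- `S` is a critical independent set: independent and maximizing `|S| - |N(S)|`
among independent sets. -/
def IsCriticalIndep (G : SimpleGraph V) (S : Set V) : Prop :=
  IsIndep G S ∧ ∀ T : Set V, IsIndep G T → diffZ G T ≤ diffZ G S

/-- `ker(G)`: intersection of all critical independent sets. -/
def kerSet (G : SimpleGraph V) : Set V := ⋂₀ {S | IsCriticalIndep G S}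

/-- `M` is a maximum matching of `G`. -/
def IsMaxMatching (G : SimpleGraph V) (M : G.Subgraph) : Prop :=
  M.IsMatching ∧ ∀ M' : G.Subgraph, M'.IsMatching → M'.edgeSet.ncard ≤ M.edgeSet.ncard

/-- The matching number `μ(G)`. -/
noncomputable def matchNum (G : SimpleGraph V) : ℕ :=
  sSup {n | ∃ M : G.Subgraph, M.IsMatching ∧ M.edgeSet.ncard = n}

/-- `D(G)`: vertices missed by some maximum matching. -/
def DSet (G : SimpleGraph V) : Set V :=
  {v | ∃ M : G.Subgraph, IsMaxMatching G M ∧ v ∉ M.verts}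

/-- `C` is the vertex set of an odd cycle of `G`. -/
def IsOddCycle (G : SimpleGraph V) (C : Set V) : Prop :=
  ∃ (u : V) (w : G.Walk u u), w.IsCycle ∧ Odd w.length ∧ ∀ v, v ∈ w.support ↔ v ∈ C

/-- An edge list is `M`-alternating: consecutive edges, exactly one in `M`. -/
def Alternating (G : SimpleGraph V) (M : G.Subgraph) (l : List (Sym2 V)) : Prop :=
  List.Chain' (fun e f => (e ∈ M.edgeSet ↔ f ∉ M.edgeSet)) l

/-- `w` is an `M`-blossom with base `b`: an odd cycle, alternating, whose two
edges at the base are unmatched (so it carries `⌊length/2⌋` matched edges). -/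
structure IsBlossom (G : SimpleGraph V) (M : G.Subgraph) (b : V) (w : G.Walk b b) : Prop where
  cyc : w.IsCycle
  odd : Odd w.length
  alt : Alternating G M w.edges
  first : ∀ e ∈ w.edges.head?, e ∉ M.edgeSet
  last : ∀ e ∈ w.edges.getLast?, e ∉ M.edgeSet

/-- `p` is an `M`-stem from base `b` to root `r`: an even alternating path
starting (if nonempty) with a matched edge, whose root is `M`-unsaturated. -/
structure IsStem (G : SimpleGraph V) (M : G.Subgraph) (b r : V) (p : G.Walk b r) : Prop where
  path : p.IsPath
  even : Even p.length
  alt : Alternating G M p.edges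
  first : ∀ e ∈ p.edges.head?, e ∈ M.edgeSet
  root : r ∉ M.verts

/-- `F` is the vertex set of an `M`-flower of `G` whose blossom has vertex set `C`. -/
def IsFlowerOn (G : SimpleGraph V) (M : G.Subgraph) (C F : Set V) : Prop :=
  ∃ (b r : V) (w : G.Walk b b) (p : G.Walk b r),
    IsBlossom G M b w ∧ IsStem G M b r p ∧
    (∀ v, v ∈ w.support ↔ v ∈ C) ∧
    (∀ v, v ∈ p.support → v ∈ w.support → v = b) ∧
    F = {v | v ∈ w.support ∨ v ∈ p.support}

/-- The reach set `R(C)` of an odd cycle `C`: union of the vertex sets of all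
`M`-flowers with blossom `C`, over all maximum matchings `M`. -/
def reach (G : SimpleGraph V) (C : Set V) : Set V :=
  ⋃₀ {F | ∃ M : G.Subgraph, IsMaxMatching G M ∧ IsFlowerOn G M C F}

/-- `G` is `R`-disjoint: it has an odd cycle, every odd cycle has nonempty reach
set, and reach sets of distinct odd cycles are disjoint. -/
def RDisjoint (G : SimpleGraph V) : Prop :=
  (∃ C : Set V, IsOddCycle G C) ∧
  (∀ C : Set V, IsOddCycle G C → (reach G C).Nonempty) ∧
  (∀ C C' : Set V, IsOddCycle G C → IsOddCycle G C' → C ≠ C' →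
    reach G C ∩ reach G C' = ∅)

/-- `B(G) = V(G) \ ⋃_C R(C)`. -/
def bipartPart (G : SimpleGraph V) : Set V :=
  {v | ∀ C : Set V, IsOddCycle G C → v ∉ reach G C}

/-- `G` is bipartite: its vertex set splits into two independent sets. -/
def IsBipartiteGraph (G : SimpleGraph V) : Prop :=
  ∃ A B : Set V, (∀ v, v ∈ A ∨ v ∈ B) ∧ A ∩ B = ∅ ∧ IsIndep G A ∧ IsIndep G B

/-- `G` is almost bipartite: it has exactly one odd cycle. -/
def AlmostBipartite (G : SimpleGraph V) : Prop := ∃! C : Set V, IsOddCycle G C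

/-- `G` is a König–Egerváry graph: `α(G) + μ(G) = |V(G)|`. -/
def IsKE {W : Type*} (G : SimpleGraph W) : Prop :=
  _root_.indepNum G + matchNum G = Nat.card W

/-- The critical difference `d(G)`. -/
noncomputable def critDiff (G : SimpleGraph V) : ℤ :=
  sSup {d : ℤ | ∃ S : Set V, diffZ G S = d}

/-- The critical independence difference `d_I(G)`. -/
noncomputable def critIndepDiff (G : SimpleGraph V) : ℤ :=
  sSup {d : ℤ | ∃ S : Set V, IsIndep G S ∧ diffZ G S = d}
theorem isIndep_sdiff_nset (G : SimpleGraph V) (X : Set V) : IsIndep G (X \ NSet G X) :=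
  fun u hu _ hv hadj => hv.2 ⟨u, hu.1, hadj⟩

theorem nset_sdiff_nset_subset (G : SimpleGraph V) (X : Set V) :
    NSet G (X \ NSet G X) ⊆ NSet G X \ X := by
  rintro w ⟨u, hu, hadj⟩
  exact ⟨⟨u, hu.1, hadj⟩, fun hw => hu.2 ⟨w, hw, hadj.symm⟩⟩

/-- Removing `X ∩ N(X)` from `X` loses `|X ∩ N(X)|` vertices of `X` but also at least as many
neighbours, since no vertex of `X \ N(X)` is adjacent to `X ∩ N(X)`. -/
theorem diffZ_le_diffZ_sdiff_nset [Finite V] (G : SimpleGraph V) (X : Set V) :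
    diffZ G X ≤ diffZ G (X \ NSet G X) := by
  set N := NSet G X
  have hX : ((X ∩ N).ncard : ℤ) + (X \ N).ncard = X.ncard := by
    exact_mod_cast Set.ncard_inter_add_ncard_sdiff_eq_ncard X N
  have hN : ((N ∩ X).ncard : ℤ) + (N \ X).ncard = N.ncard := by
    exact_mod_cast Set.ncard_inter_add_ncard_sdiff_eq_ncard N X
  have hNY : ((NSet G (X \ N)).ncard : ℤ) ≤ (N \ X).ncard := by
    exact_mod_cast Set.ncard_le_ncard (nset_sdiff_nset_subset G X)
  rw [Set.inter_comm] at hN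
  unfold diffZ
  linarith

theorem diffZ_le_card [Finite V] (G : SimpleGraph V) (S : Set V) : diffZ G S ≤ Nat.card V := by
  have := Set.ncard_le_card S
  unfold diffZ
  omega

/-- For every finite graph, the critical difference equals the critical
independence difference. -/
theorem stmt_2 {V : Type u} [Fintype V] (G : SimpleGraph V) :
    critDiff G = critIndepDiff G := by
  have hIndepSub : {d : ℤ | ∃ S : Set V, IsIndep G S ∧ diffZ G S = d} ⊆
      {d : ℤ | ∃ S : Set V, diffZ G S = d} := by
    rintro d ⟨S, -, hS⟩
    exact ⟨S, hS⟩
  have hBdd : BddAbove {d : ℤ | ∃ S : Set V, diffZ G S = d} :=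
    ⟨Nat.card V, by rintro d ⟨S, rfl⟩; exact diffZ_le_card G S⟩
  apply le_antisymm
  · refine csSup_le ⟨_, ∅, rfl⟩ ?_
    rintro d ⟨X, rfl⟩
    exact (diffZ_le_diffZ_sdiff_nset G X).trans
      (le_csSup (hBdd.mono hIndepSub) ⟨_, isIndep_sdiff_nset G X, rfl⟩)
  · exact csSup_le_csSup hBdd ⟨_, ∅, fun u hu => hu.elim, rfl⟩ hIndepSub
end

section
/- For every finite simple graph G, ker(G) is contained in core(G), i.e., every vertex lying in all critical independent sets also lies in all maximum independent sets. -/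
open SimpleGraph

universe u

variable {V : Type u}

/-!
If `A` is critical and `S` is maximum independent, then `A ∩ S` is again critical. Indeed
`(S \ N(A)) ∪ (A \ S)` is independent, so maximality of `S` gives `|A \ S| ≤ |N(A) ∩ S|`,
while `N(A ∩ S)` and `N(A) ∩ S` are disjoint subsets of `N(A)`; together these give
`d(A) ≤ d(A ∩ S)`. Hence `ker(G) ⊆ A ∩ S ⊆ S`.
-/

theorem exists_isCriticalIndep [Finite V] (G : SimpleGraph V) : ∃ A, IsCriticalIndep G A := by
  have : Nonempty {T : Set V // IsIndep G T} := ⟨⟨∅, fun u hu => absurd hu (Set.notMem_empty u)⟩⟩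
  obtain ⟨⟨A, hA⟩, hmax⟩ := Finite.exists_max fun T : {T : Set V // IsIndep G T} => diffZ G T.1
  exact ⟨A, hA, fun T hT => hmax ⟨T, hT⟩⟩

section

variable {G : SimpleGraph V} {A S : Set V}

theorem IsIndep.inter_left (hA : IsIndep G A) (S : Set V) : IsIndep G (A ∩ S) :=
  fun _ hu _ hw => hA hu.1 hw.1

theorem IsIndep.diff_nSet_union_diff (hS : IsIndep G S) (hA : IsIndep G A) :
    IsIndep G ((S \ NSet G A) ∪ (A \ S)) := by
  rintro u (hu | hu) w (hw | hw) hadj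
  · exact hS hu.1 hw.1 hadj
  · exact hu.2 ⟨w, hw.1, hadj.symm⟩
  · exact hw.2 ⟨u, hu.1, hadj⟩
  · exact hA hu.1 hw.1 hadj

theorem IsMaxIndep.ncard_diff_le_ncard_nSet_inter [Finite V] (hS : IsMaxIndep G S)
    (hA : IsIndep G A) : (A \ S).ncard ≤ (NSet G A ∩ S).ncard := by
  have hdisj : Disjoint (S \ NSet G A) (A \ S) :=
    Set.disjoint_left.mpr fun _ hu hu' => hu'.2 hu.1
  have hswap : (S \ NSet G A).ncard + (A \ S).ncard ≤ S.ncard := by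
    rw [← Set.ncard_union_eq hdisj]
    exact hS.2 _ (hS.1.diff_nSet_union_diff hA)
  have hsplit := Set.ncard_inter_add_ncard_sdiff_eq_ncard S (NSet G A)
  rw [Set.inter_comm] at hsplit
  omega

theorem IsIndep.ncard_nSet_inter_add_ncard_nSet_inter_le [Finite V] (hS : IsIndep G S)
    (A : Set V) : (NSet G (A ∩ S)).ncard + (NSet G A ∩ S).ncard ≤ (NSet G A).ncard := by
  have hdisj : Disjoint (NSet G (A ∩ S)) (NSet G A ∩ S) := by
    rw [Set.disjoint_left]
    rintro z ⟨b, hb, hadj⟩ hz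
    exact hS hb.2 hz.2 hadj
  rw [← Set.ncard_union_eq hdisj]
  refine Set.ncard_le_ncard ?_
  rintro z (⟨b, hb, hadj⟩ | hz)
  · exact ⟨b, hb.1, hadj⟩
  · exact hz.1

theorem IsMaxIndep.diffZ_le_diffZ_inter [Finite V] (hS : IsMaxIndep G S) (hA : IsIndep G A) :
    diffZ G A ≤ diffZ G (A ∩ S) := by
  have hswap := hS.ncard_diff_le_ncard_nSet_inter hA
  have hnbhd := hS.1.ncard_nSet_inter_add_ncard_nSet_inter_le A
  have hsplit := Set.ncard_inter_add_ncard_sdiff_eq_ncard A S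
  unfold diffZ
  omega

theorem IsCriticalIndep.inter_isMaxIndep [Finite V] (hA : IsCriticalIndep G A)
    (hS : IsMaxIndep G S) : IsCriticalIndep G (A ∩ S) :=
  ⟨hA.1.inter_left S, fun T hT => (hA.2 T hT).trans (hS.diffZ_le_diffZ_inter hA.1)⟩

end

/-- For every finite graph, `ker(G) ⊆ core(G)`. -/
theorem stmt_3 {V : Type u} [Fintype V] (G : SimpleGraph V) :
    kerSet G ⊆ core G := by
  obtain ⟨A, hA⟩ := exists_isCriticalIndep G
  intro v hv
  refine Set.mem_sInter.mpr fun S hS => ?_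
  exact (hv _ (hA.inter_isMaxIndep hS)).2
end

section
/- If G is a finite simple graph in which every two distinct odd cycles are vertex-disjoint, then every connected component of the induced subgraph G[D(G)] is either a single vertex or an odd cycle, where D(G) is the set of vertices missed by some maximum matching. -/
open SimpleGraph

universe u

variable {V : Type u}

/-!
If `u v` is an edge of `G[D(G)]`, take maximum matchings `M` missing `v` and `M'` missing `u`.
Growing an `M`/`M'`-alternating path from `u` (the component of `u` in `M Δ M'`) yields an even
path that must end at `v`, since otherwise it, or it preceded by `v`, would be augmenting. Closing
it with `v u` gives an odd `M`-alternating cycle through the `M`-exposed vertex `v`, and shifting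
`M` along either arc of this cycle shows that all its vertices lie in `D(G)`. So every edge of
`G[D(G)]` lies on an odd cycle inside `D(G)`. If odd cycles are vertex-disjoint, two odd cycles
that meet have the same vertex set, and an odd cycle has no chord: a chord would close an odd cycle
with the even arc it cuts off, on fewer vertices. Hence the odd cycle through an edge at `x`
contains every edge of `G[D(G)]` at each of its vertices, and is the component of `x`.
-/

namespace List

variable {α : Type*} {A B : Set α}

@[simp]
def Alternates (A B : Set α) : List α → Prop
  | [] => True
  | a :: l => a ∈ A ∧ l.Alternates B A

theorem Alternates.imp :
    ∀ {l : List α} {A B A' B' : Set α}, l.Alternates A B →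
      (∀ a ∈ l, a ∈ A → a ∈ A') → (∀ a ∈ l, a ∈ B → a ∈ B') → l.Alternates A' B'
  | [], _, _, _, _, _, _, _ => trivial
  | a :: _, _, _, _, _, ⟨ha, hl⟩, hA, hB =>
    ⟨hA a mem_cons_self ha, hl.imp (fun b hb => hB b (mem_cons_of_mem a hb))
      (fun b hb => hA b (mem_cons_of_mem a hb))⟩

theorem alternates_append :
    ∀ {l₁ l₂ : List α} {A B : Set α}, (l₁ ++ l₂).Alternates A B ↔
      l₁.Alternates A B ∧ if Even l₁.length then l₂.Alternates A B else l₂.Alternates B A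
  | [], _, _, _ => by simp
  | _ :: l, _, _, _ => by
    by_cases h : Even l.length <;> simp [alternates_append, Nat.even_add_one, h, and_assoc]

theorem alternates_concat {l : List α} {a : α} :
    (l ++ [a]).Alternates A B ↔ l.Alternates A B ∧ a ∈ if Even l.length then A else B := by
  by_cases h : Even l.length <;> simp [alternates_append, h]

theorem Alternates.getLast_mem {l : List α} (hl : l.Alternates A B) (hne : l ≠ []) :
    l.getLast hne ∈ if Even l.length then B else A := by
  have hlen : l.length = l.dropLast.length + 1 := by
    rw [length_dropLast, Nat.sub_add_cancel (length_pos_iff.mpr hne)]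
  rw [← dropLast_append_getLast hne, alternates_concat] at hl
  have hlast := hl.2
  rw [hlen]
  by_cases h : Even l.dropLast.length
  · rw [if_neg (by simpa [Nat.even_add_one] using h)]
    rwa [if_pos h] at hlast
  · rw [if_pos (by simpa [Nat.even_add_one] using h)]
    rwa [if_neg h] at hlast

theorem Alternates.reverse :
    ∀ {l : List α} {A B : Set α}, l.Alternates A B →
      l.reverse.Alternates (if Even l.length then B else A) (if Even l.length then A else B)
  | [], _, _, _ => by simp
  | a :: l, _, _, ⟨ha, hl⟩ => by
    have := hl.reverse
    by_cases h : Even l.length <;> simp_all [alternates_append, Nat.even_add_one]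

end List

namespace SimpleGraph

open Walk

variable {W : Type*} {G : SimpleGraph V} {S : Set V} {s s' t A B : Set (Sym2 V)}
  {a b u v x y z : V}

-- Matchings are handled as edge sets, along which they are easily shifted; `mem_DSet_iff`
-- translates `DSet` into this language.
def IsEdgeMatching (G : SimpleGraph V) (s : Set (Sym2 V)) : Prop :=
  s ⊆ G.edgeSet ∧ ∀ e ∈ s, ∀ f ∈ s, ∀ x, x ∈ e → x ∈ f → e = f

def IsMaxEdgeMatching (G : SimpleGraph V) (s : Set (Sym2 V)) : Prop :=
  IsEdgeMatching G s ∧ ∀ t, IsEdgeMatching G t → t.ncard ≤ s.ncard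

def Covers (s : Set (Sym2 V)) (x : V) : Prop := ∃ e ∈ s, x ∈ e

@[simp]
theorem covers_insert {e : Sym2 V} : Covers (insert e s) x ↔ x ∈ e ∨ Covers s x := by
  simp [Covers]

theorem Covers.mono (h : Covers t x) (hts : t ⊆ s) : Covers s x :=
  let ⟨e, he, hx⟩ := h
  ⟨e, hts he, hx⟩

namespace IsEdgeMatching

theorem adj (hs : IsEdgeMatching G s) (h : s(a, b) ∈ s) : G.Adj a b := hs.1 h

theorem eq_of_mem (hs : IsEdgeMatching G s) {e f : Sym2 V} (he : e ∈ s) (hf : f ∈ s)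
    (hxe : x ∈ e) (hxf : x ∈ f) : e = f :=
  hs.2 e he f hf x hxe hxf

theorem subset (hs : IsEdgeMatching G s) (hts : t ⊆ s) : IsEdgeMatching G t :=
  ⟨hts.trans hs.1, fun e he f hf => hs.2 e (hts he) f (hts hf)⟩

theorem insert_edge (hs : IsEdgeMatching G s) (hab : G.Adj a b) (ha : ¬ Covers s a)
    (hb : ¬ Covers s b) : IsEdgeMatching G (insert s(a, b) s) := by
  have fresh : ∀ f ∈ s, ∀ x, x ∈ s(a, b) → x ∉ f := by
    rintro f hf x hx hxf
    rcases Sym2.mem_iff.mp hx with rfl | rfl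
    exacts [ha ⟨f, hf, hxf⟩, hb ⟨f, hf, hxf⟩]
  refine ⟨Set.insert_subset hab hs.1, ?_⟩
  rintro e (rfl | he) f (rfl | hf) x hxe hxf
  · rfl
  · exact absurd hxf (fresh f hf x hxe)
  · exact absurd hxe (fresh e he x hxf)
  · exact hs.eq_of_mem he hf hxe hxf

theorem ncard_insert [Finite V] (ha : ¬ Covers s a) : (insert s(a, b) s).ncard = s.ncard + 1 :=
  Set.ncard_insert_of_notMem fun h => ha ⟨_, h, Sym2.mem_mk_left a b⟩

theorem not_covers_sdiff (hs : IsEdgeMatching G s) {e : Sym2 V} (he : e ∈ s) (hx : x ∈ e) :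
    ¬ Covers (s \ {e}) x := fun ⟨_, ⟨hf, hne⟩, hxf⟩ =>
  hne (hs.eq_of_mem hf he hxf hx)

end IsEdgeMatching

theorem Subgraph.IsMatching.mem_verts_iff_covers {M : G.Subgraph} (hM : M.IsMatching) :
    v ∈ M.verts ↔ Covers M.edgeSet v := by
  rw [← hM.support_eq_verts, Subgraph.mem_support]
  constructor
  · rintro ⟨w, hw⟩
    exact ⟨s(v, w), hw, Sym2.mem_mk_left v w⟩
  · rintro ⟨e, he, hve⟩
    obtain ⟨w, rfl⟩ := Sym2.mem_iff_exists.mp hve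
    exact ⟨w, he⟩

theorem Subgraph.IsMatching.isEdgeMatching {M : G.Subgraph} (hM : M.IsMatching) :
    IsEdgeMatching G M.edgeSet := by
  refine ⟨M.edgeSet_subset, fun e he f hf x hxe hxf => ?_⟩
  obtain ⟨y, rfl⟩ := Sym2.mem_iff_exists.mp hxe
  obtain ⟨z, rfl⟩ := Sym2.mem_iff_exists.mp hxf
  rw [hM.eq_of_adj_left (Subgraph.mem_edgeSet.mp he) (Subgraph.mem_edgeSet.mp hf)]

theorem IsEdgeMatching.exists_subgraph (hs : IsEdgeMatching G s) :
    ∃ M : G.Subgraph, M.IsMatching ∧ M.edgeSet = s ∧ ∀ v, v ∈ M.verts ↔ Covers s v := by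
  let M : G.Subgraph :=
    { verts := {v | Covers s v}
      Adj a b := s(a, b) ∈ s
      adj_sub h := hs.adj h
      edge_vert h := ⟨_, h, Sym2.mem_mk_left _ _⟩
      symm := ⟨fun a b h => by rwa [Sym2.eq_swap]⟩ }
  have hedges : M.edgeSet = s := Set.ext (Sym2.ind fun _ _ => Iff.rfl)
  refine ⟨M, fun v ⟨e, he, hve⟩ => ?_, hedges, fun _ => Iff.rfl⟩
  obtain ⟨w, rfl⟩ := Sym2.mem_iff_exists.mp hve
  refine ⟨w, he, fun w' hw' => ?_⟩
  have := hs.eq_of_mem hw' he (Sym2.mem_mk_left v w') (Sym2.mem_mk_left v w)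
  exact Sym2.congr_right.mp this

theorem mem_DSet_iff : v ∈ DSet G ↔ ∃ s, IsMaxEdgeMatching G s ∧ ¬ Covers s v := by
  constructor
  · rintro ⟨M, ⟨hM, hmax⟩, hv⟩
    refine ⟨M.edgeSet, ⟨hM.isEdgeMatching, fun t ht => ?_⟩,
      fun h => hv (hM.mem_verts_iff_covers.mpr h)⟩
    obtain ⟨M', hM', rfl, -⟩ := ht.exists_subgraph
    exact hmax M' hM'
  · rintro ⟨s, ⟨hs, hmax⟩, hv⟩
    obtain ⟨M, hM, rfl, hverts⟩ := hs.exists_subgraph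
    exact ⟨M, ⟨hM, fun M' hM' => hmax _ hM'.isEdgeMatching⟩, fun h => hv ((hverts v).mp h)⟩

theorem IsEdgeMatching.exists_not_covers_of_even [Finite V] :
    ∀ {s : Set (Sym2 V)} {a b : V} (w : G.Walk a b), IsEdgeMatching G s → ¬ Covers s a →
      w.IsPath → Even w.length → w.edges.Alternates sᶜ s →
      ∃ t, IsEdgeMatching G t ∧ t.ncard = s.ncard ∧ ¬ Covers t b ∧
        t ⊆ s ∪ {e | e ∈ w.edges}
  | s, _, _, .nil, hs, ha, _, _, _ => ⟨s, hs, rfl, ha, Set.subset_union_left⟩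
  | _, _, _, .cons _ .nil, _, _, _, heven, _ => by simp at heven
  | s, a, _, .cons (v := c) hac (.cons (v := d) hcd w), hs, ha, hw, heven, halt => by
    -- trade the matched edge `s(c, d)` for `s(a, c)`, then recurse from the exposed `d`
    obtain ⟨-, hcds, halt⟩ : s(a, c) ∉ s ∧ s(c, d) ∈ s ∧ w.edges.Alternates sᶜ s := by
      simpa using halt
    obtain ⟨hw, haw⟩ := (cons_isPath_iff _ _).mp hw
    obtain ⟨hw, hcw⟩ := (cons_isPath_iff _ _).mp hw
    simp only [support_cons, List.mem_cons, not_or] at haw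
    have hcw' : ∀ e ∈ w.edges, c ∉ e := fun e he hce =>
      hcw (w.mem_support_of_mem_edges he hce)
    let s₀ := s \ {s(c, d)}
    have ha₀ : ¬ Covers s₀ a := fun h => ha (h.mono Set.sdiff_subset)
    have hs₁ : IsEdgeMatching G (insert s(a, c) s₀) :=
      (hs.subset Set.sdiff_subset).insert_edge hac ha₀
        (hs.not_covers_sdiff hcds (Sym2.mem_mk_left c d))
    have hcard : (insert s(a, c) s₀).ncard = s.ncard := by
      rw [IsEdgeMatching.ncard_insert ha₀, Set.ncard_sdiff_singleton_add_one hcds]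
    have hd : ¬ Covers (insert s(a, c) s₀) d := by
      rw [covers_insert, Sym2.mem_iff, not_or, not_or]
      exact ⟨⟨fun h => haw.2 (h ▸ w.start_mem_support), hcd.ne.symm⟩,
        hs.not_covers_sdiff hcds (Sym2.mem_mk_right c d)⟩
    have halt₁ : w.edges.Alternates (insert s(a, c) s₀)ᶜ (insert s(a, c) s₀) := by
      refine halt.imp (fun e he hes => ?_) (fun e he hes => ?_)
      · rintro (rfl | ⟨h, -⟩)
        exacts [hcw' _ he (Sym2.mem_mk_right a c), hes h]
      · refine Or.inr ⟨hes, ?_⟩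
        rintro rfl
        exact hcw' _ he (Sym2.mem_mk_left c d)
    obtain ⟨t, ht, htcard, htd, hts⟩ := exists_not_covers_of_even w hs₁ hd hw
      (by simpa [Nat.even_add_one] using heven) halt₁
    refine ⟨t, ht, htcard.trans hcard, htd, hts.trans ?_⟩
    rintro e ((rfl | ⟨he, -⟩) | he) <;> simp_all

theorem IsEdgeMatching.exists_ncard_eq_add_one_of_odd [Finite V] (hs : IsEdgeMatching G s)
    (w : G.Walk a b) (hw : w.IsPath) (hodd : Odd w.length) (halt : w.edges.Alternates sᶜ s)
    (ha : ¬ Covers s a) (hb : ¬ Covers s b) :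
    ∃ t, IsEdgeMatching G t ∧ t.ncard = s.ncard + 1 := by
  cases w with
  | nil => simp at hodd
  | @cons _ c _ hac w =>
    obtain ⟨hw, haw⟩ := (cons_isPath_iff _ _).mp hw
    have heven : Even w.length := by simpa [Nat.odd_add_one] using hodd
    rw [edges_cons] at halt
    have halt' : w.reverse.edges.Alternates sᶜ s := by simpa [heven] using halt.2.reverse
    obtain ⟨t, ht, hcard, hc, hts⟩ :=
      hs.exists_not_covers_of_even w.reverse hb hw.reverse (by simpa using heven) halt'
    have ha' : ¬ Covers t a := by
      rintro ⟨e, he, hae⟩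
      rcases hts he with he | he
      · exact ha ⟨e, he, hae⟩
      · exact haw (by simpa using w.reverse.mem_support_of_mem_edges he hae)
    exact ⟨_, ht.insert_edge hac ha' hc, by rw [IsEdgeMatching.ncard_insert ha', hcard]⟩

namespace IsMaxEdgeMatching

variable [Finite V]

theorem covers_of_odd (hs : IsMaxEdgeMatching G s) (w : G.Walk a b) (hw : w.IsPath)
    (hodd : Odd w.length) (halt : w.edges.Alternates sᶜ s) (ha : ¬ Covers s a) : Covers s b := by
  by_contra hb
  obtain ⟨t, ht, hcard⟩ := hs.1.exists_ncard_eq_add_one_of_odd w hw hodd halt ha hb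
  have := hs.2 t ht
  omega

theorem mem_DSet_of_even (hs : IsMaxEdgeMatching G s) (w : G.Walk a b) (hw : w.IsPath)
    (heven : Even w.length) (halt : w.edges.Alternates sᶜ s) (ha : ¬ Covers s a) :
    b ∈ DSet G := by
  obtain ⟨t, ht, hcard, hb, -⟩ := hs.1.exists_not_covers_of_even w ha hw heven halt
  exact mem_DSet_iff.mpr ⟨t, ⟨ht, fun t' ht' => hcard ▸ hs.2 t' ht'⟩, hb⟩

theorem mem_DSet_of_isCycle (hs : IsMaxEdgeMatching G s) (ha : ¬ Covers s a) {c : G.Walk a a}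
    (hc : c.IsCycle) (hodd : Odd c.length) (halt : c.edges.Alternates sᶜ s) {x : V}
    (hx : x ∈ c.support) : x ∈ DSet G := by
  classical
  have hspec := c.take_spec hx
  have hlen : (c.takeUntil x hx).length + (c.dropUntil x hx).length = c.length := by
    rw [← length_append, hspec]
  rw [← hspec, edges_append, List.alternates_append, length_edges] at halt
  by_cases heven : Even (c.takeUntil x hx).length
  · exact hs.mem_DSet_of_even _ (hc.isPath_takeUntil hx) heven halt.1 ha
  rw [if_neg heven] at halt
  have hpath : (c.dropUntil x hx).IsPath :=
    (hspec ▸ hc).isPath_of_append_right fun h => heven (by simp [h.length_eq_zero])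
  have heven' : Even (c.dropUntil x hx).length := by
    obtain ⟨k, hk⟩ := Nat.not_even_iff_odd.mp heven
    obtain ⟨m, hm⟩ := hodd
    exact ⟨m - k, by omega⟩
  exact hs.mem_DSet_of_even _ hpath.reverse (by simpa using heven')
    (by simpa [heven'] using halt.2.reverse) ha

end IsMaxEdgeMatching

theorem Walk.exists_mem_edges_of_alternates :
    ∀ {u z : V} (w : G.Walk u z), w.edges.Alternates A B →
      ∀ x ∈ w.support, x ≠ z → ∃ e ∈ w.edges, e ∈ A ∧ x ∈ e
  | _, _, .nil, _, x, hx, hxz => absurd (by simpa using hx) hxz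
  | _, _, .cons _ .nil, halt, x, hx, hxz => by
    obtain ⟨hA, -⟩ := halt
    simp only [support_cons, support_nil, List.mem_cons, List.not_mem_nil, or_false] at hx
    rcases hx with rfl | rfl
    exacts [⟨_, List.mem_cons_self, hA, Sym2.mem_mk_left _ _⟩, absurd rfl hxz]
  | _, _, .cons _ (.cons _ w), halt, x, hx, hxz => by
    obtain ⟨hA, -, halt⟩ := halt
    rw [support_cons, support_cons, List.mem_cons, List.mem_cons] at hx
    rcases hx with rfl | rfl | hx
    · exact ⟨_, List.mem_cons_self, hA, Sym2.mem_mk_left _ _⟩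
    · exact ⟨_, List.mem_cons_self, hA, Sym2.mem_mk_right _ _⟩
    · obtain ⟨e, he, heA, hxe⟩ := w.exists_mem_edges_of_alternates halt x hx hxz
      exact ⟨e, by simp [he], heA, hxe⟩

theorem Walk.exists_mem_edges_of_alternates_of_ne_start (w : G.Walk u z)
    (halt : w.edges.Alternates B A) {x : V} (hx : x ∈ w.support) (hxu : x ≠ u) (hxz : x ≠ z) :
    ∃ e ∈ w.edges, e ∈ A ∧ x ∈ e := by
  cases w with
  | nil => exact absurd (by simpa using hx) hxz
  | cons _ w =>
    obtain ⟨e, he, heA, hxe⟩ :=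
      w.exists_mem_edges_of_alternates halt.2 x (by simpa [hxu] using hx) hxz
    exact ⟨e, by simp [he], heA, hxe⟩

theorem Walk.IsPath.notMem_support_of_mem (hA : IsEdgeMatching G A) {w : G.Walk u z}
    (hw : w.IsPath) (hlast : s(w.penultimate, z) ∉ A)
    (hcov : ∀ x ∈ w.support, x ≠ z → Covers A x → ∃ e ∈ w.edges, e ∈ A ∧ x ∈ e)
    (hzy : s(z, y) ∈ A) : y ∉ w.support := by
  intro hy
  obtain ⟨e, he, heA, hye⟩ :=
    hcov y hy (hA.adj hzy).ne.symm ⟨_, hzy, Sym2.mem_mk_right z y⟩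
  obtain rfl := hA.eq_of_mem heA hzy hye (Sym2.mem_mk_right z y)
  rw [← hw.eq_penultimate_of_mem_edges he, Sym2.eq_swap] at hlast
  exact hlast hzy

theorem exists_concat_alternates [Finite V] (hs : IsEdgeMatching G s)
    (hs' : IsMaxEdgeMatching G s') (hu : ¬ Covers s' u) (w : G.Walk u z) (hw : w.IsPath)
    (hnil : ¬ w.Nil) (halt : w.edges.Alternates (s \ s') (s' \ s))
    (hz : Even w.length → Covers s z) :
    ∃ y, ∃ h : G.Adj z y, (w.concat h).IsPath ∧
      (w.concat h).edges.Alternates (s \ s') (s' \ s) := by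
  have hlast := halt.getLast_mem (edges_eq_nil.not.mpr hnil)
  rw [getLast_edges_eq_mk_penultimate_end, length_edges] at hlast
  suffices ∃ y, s(z, y) ∈ (if Even w.length then s \ s' else s' \ s) ∧ y ∉ w.support by
    obtain ⟨y, hy, hyw⟩ := this
    have hzy : G.Adj z y := by
      split_ifs at hy
      exacts [hs.adj hy.1, hs'.1.adj hy.1]
    refine ⟨y, hzy, hw.concat hyw hzy, ?_⟩
    rw [edges_concat, List.concat_eq_append, List.alternates_concat, length_edges]
    exact ⟨halt, hy⟩
  by_cases heven : Even w.length
  · simp only [heven, if_true] at hlast ⊢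
    obtain ⟨e, he, hze⟩ := hz heven
    obtain ⟨y, rfl⟩ := Sym2.mem_iff_exists.mp hze
    refine ⟨y, ⟨he, fun he' => hlast.2 ?_⟩, hw.notMem_support_of_mem hs hlast.2 ?_ he⟩
    · rwa [hs'.1.eq_of_mem hlast.1 he' (Sym2.mem_mk_right _ z) (Sym2.mem_mk_left z y)]
    · intro x hx hxz _
      obtain ⟨e, he, heA, hxe⟩ := w.exists_mem_edges_of_alternates halt x hx hxz
      exact ⟨e, he, heA.1, hxe⟩
  · simp only [heven, if_false] at hlast ⊢
    obtain ⟨e, he, hze⟩ := hs'.covers_of_odd w hw (Nat.not_even_iff_odd.mp heven)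
      (halt.imp (fun _ _ he => he.2) (fun _ _ he => he.1)) hu
    obtain ⟨y, rfl⟩ := Sym2.mem_iff_exists.mp hze
    refine ⟨y, ⟨he, fun he' => hlast.2 ?_⟩, hw.notMem_support_of_mem hs'.1 hlast.2 ?_ he⟩
    · rwa [hs.eq_of_mem hlast.1 he' (Sym2.mem_mk_right _ z) (Sym2.mem_mk_left z y)]
    · intro x hx hxz hxs'
      obtain ⟨e, he, heA, hxe⟩ := w.exists_mem_edges_of_alternates_of_ne_start halt hx
        (fun hxu => hu (hxu ▸ hxs')) hxz
      exact ⟨e, he, heA.1, hxe⟩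

theorem exists_even_alternating_path [Finite V] (hs : IsEdgeMatching G s)
    (hs' : IsMaxEdgeMatching G s') (hu : ¬ Covers s' u) (hus : Covers s u) :
    ∃ z, ∃ w : G.Walk u z, w.IsPath ∧ Even w.length ∧
      w.edges.Alternates (s \ s') (s' \ s) ∧ ¬ Covers s z := by
  have := Fintype.ofFinite V
  suffices ∀ n z (w : G.Walk u z), Fintype.card V ≤ w.length + n → w.IsPath → ¬ w.Nil →
      w.edges.Alternates (s \ s') (s' \ s) →
      ∃ z, ∃ w : G.Walk u z, w.IsPath ∧ Even w.length ∧
        w.edges.Alternates (s \ s') (s' \ s) ∧ ¬ Covers s z by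
    obtain ⟨e, he, hue⟩ := hus
    obtain ⟨y, rfl⟩ := Sym2.mem_iff_exists.mp hue
    have huy := hs.adj he
    exact this (Fintype.card V) _ huy.toWalk (by simp) (by simp [huy.ne]) (by simp)
      ⟨⟨he, fun h => hu ⟨_, h, Sym2.mem_mk_left u y⟩⟩, trivial⟩
  intro n
  induction n with
  | zero => exact fun z w hcard hw => absurd hw.length_lt (by omega)
  | succ n ih =>
    intro z w hcard hw hnil halt
    by_cases hstop : Even w.length ∧ ¬ Covers s z
    · exact ⟨z, w, hw, hstop.1, halt, hstop.2⟩
    obtain ⟨y, hzy, hw', halt'⟩ :=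
      exists_concat_alternates hs hs' hu w hw hnil halt (fun h => not_not.mp (not_and.mp hstop h))
    exact ih y (w.concat hzy) (by simp; omega) hw' (by simp [concat_eq_append, nil_append_iff])
      halt'

theorem exists_isCycle_odd_of_adj_of_mem_DSet [Finite V] (hu : u ∈ DSet G) (hv : v ∈ DSet G)
    (huv : G.Adj u v) :
    ∃ c : G.Walk v v, c.IsCycle ∧ Odd c.length ∧ s(u, v) ∈ c.edges ∧
      ∀ x ∈ c.support, x ∈ DSet G := by
  obtain ⟨s, hs, hvs⟩ := mem_DSet_iff.mp hv
  obtain ⟨s', hs', hus'⟩ := mem_DSet_iff.mp hu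
  have hvu : s(v, u) ∉ s := fun h => hvs ⟨_, h, Sym2.mem_mk_left v u⟩
  have hus : Covers s u :=
    hs.covers_of_odd huv.symm.toWalk (by simp [huv.ne.symm]) (by simp) ⟨hvu, trivial⟩ hvs
  obtain ⟨z, w, hw, heven, halt, hzs⟩ := exists_even_alternating_path hs.1 hs' hus' hus
  have halt' : (cons huv.symm w).edges.Alternates sᶜ s :=
    ⟨hvu, halt.imp (fun _ _ he => he.1) (fun _ _ he => he.2)⟩
  have hodd : Odd (cons huv.symm w).length := by simpa [Nat.odd_add_one] using heven
  obtain rfl : z = v := by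
    by_contra hzv
    have hvw : v ∉ w.support := fun hvw =>
      let ⟨e, _, he, hve⟩ := w.exists_mem_edges_of_alternates halt v hvw (Ne.symm hzv)
      hvs ⟨e, he.1, hve⟩
    exact hzs (hs.covers_of_odd _ (hw.cons hvw) hodd halt' hvs)
  have hc : (cons huv.symm w).IsCycle := by
    refine (cons_isCycle_iff _ _).mpr ⟨hw, fun h => ?_⟩
    have := hw.length_eq_one_of_mem_edges (Sym2.eq_swap ▸ h)
    exact Nat.not_even_one (this ▸ heven)
  exact ⟨_, hc, hodd, by simp [Sym2.eq_swap],
    fun x hx => hs.mem_DSet_of_isCycle hvs hc hodd halt' hx⟩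

def OddCycleDisjoint (G : SimpleGraph V) : Prop :=
  ∀ C C' : Set V, IsOddCycle G C → IsOddCycle G C' → C ≠ C' → C ∩ C' = ∅

theorem Walk.mk_mem_edges_of_length_eq_one {p : G.Walk u v} (h : p.length = 1) :
    s(u, v) ∈ p.edges := by
  cases p with
  | nil => simp at h
  | cons _ p => cases p with
    | nil => simp
    | cons _ _ => simp at h

theorem Walk.IsCycle.ncard_support {c : G.Walk u u} (hc : c.IsCycle) :
    {v | v ∈ c.support}.ncard = c.length := by
  classical
  have hsupp : {v | v ∈ c.support} = ↑c.support.tail.toFinset := by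
    ext v
    rw [Finset.mem_coe, List.mem_toFinset]
    refine ⟨fun h => ?_, List.mem_of_mem_tail⟩
    rcases c.mem_support_iff.mp h with rfl | h
    exacts [end_mem_tail_support hc.not_nil, h]
  rw [hsupp, Set.ncard_coe_finset, List.toFinset_card_of_nodup hc.support_nodup,
    List.length_tail, length_support, Nat.add_sub_cancel]

namespace OddCycleDisjoint

theorem support_eq (hG : OddCycleDisjoint G) {c : G.Walk u u} {d : G.Walk v v}
    (hc : c.IsCycle) (hcodd : Odd c.length) (hd : d.IsCycle) (hdodd : Odd d.length)
    (hxc : x ∈ c.support) (hxd : x ∈ d.support) :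
    {y | y ∈ c.support} = {y | y ∈ d.support} := by
  by_contra hne
  have := hG _ _ ⟨u, c, hc, hcodd, fun _ => Iff.rfl⟩ ⟨v, d, hd, hdodd, fun _ => Iff.rfl⟩ hne
  exact this.subset ⟨hxc, hxd⟩

theorem length_add_one_eq (hG : OddCycleDisjoint G) {c : G.Walk u u} (hc : c.IsCycle)
    (hodd : Odd c.length) (hxy : G.Adj x y) {p : G.Walk y x} (hp : p.IsPath)
    (heven : Even p.length) (hxyp : s(x, y) ∉ p.edges) (hx : x ∈ c.support) :
    p.length + 1 = c.length := by
  have hd : (cons hxy p).IsCycle := (cons_isCycle_iff p hxy).mpr ⟨hp, hxyp⟩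
  have hdodd : Odd (cons hxy p).length := by simpa [Nat.odd_add_one] using heven
  have := congrArg Set.ncard (hG.support_eq hc hodd hd hdodd hx (start_mem_support _))
  rwa [hc.ncard_support, hd.ncard_support, length_cons, eq_comm] at this

theorem mem_edges_of_adj (hG : OddCycleDisjoint G) {c : G.Walk u u} (hc : c.IsCycle)
    (hodd : Odd c.length) (hxy : G.Adj x y) (hx : x ∈ c.support) (hy : y ∈ c.support) :
    s(x, y) ∈ c.edges := by
  classical
  suffices key : ∀ c : G.Walk x x, c.IsCycle → Odd c.length → y ∈ c.support →
      s(x, y) ∈ c.edges by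
    have := key (c.rotate x hx) (hc.rotate hx) (by rwa [length_rotate])
      ((mem_support_rotate_iff ..).mpr hy)
    exact (c.rotate_edges x hx).perm.mem_iff.mp this
  intro c hc hodd hy
  by_contra hxyc
  -- `y` splits `c` into two arcs; the even one closes an odd cycle with the chord, which by
  -- `length_add_one_eq` leaves a single edge for the other arc
  have hspec := c.take_spec hy
  have hP : (c.takeUntil y hy).IsPath := hc.isPath_takeUntil hy
  have hQ : (c.dropUntil y hy).IsPath :=
    (hspec ▸ hc).isPath_of_append_right (not_nil_of_ne hxy.ne)
  have hlen : (c.takeUntil y hy).length + (c.dropUntil y hy).length = c.length := by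
    rw [← length_append, hspec]
  have hPc := c.edges_takeUntil_subset_edges hy
  have hQc := c.edges_dropUntil_subset_edges hy
  rcases Nat.even_or_odd (c.takeUntil y hy).length with heven | hPodd
  · have := hG.length_add_one_eq hc hodd hxy hP.reverse (by simpa using heven)
      (fun h => hxyc (hPc (by simpa using h))) (start_mem_support c)
    rw [length_reverse] at this
    refine hxyc (hQc (Sym2.eq_swap ▸ mk_mem_edges_of_length_eq_one ?_))
    omega
  · have heven : Even (c.dropUntil y hy).length := by
      obtain ⟨k, hk⟩ := hPodd
      obtain ⟨m, hm⟩ := hodd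
      exact ⟨m - k, by omega⟩
    have := hG.length_add_one_eq hc hodd hxy hQ heven (fun h => hxyc (hQc h))
      (start_mem_support c)
    exact hxyc (hPc (mk_mem_edges_of_length_eq_one (by omega)))

theorem mem_edges_of_adj_of_mem_DSet [Finite V] (hG : OddCycleDisjoint G) {c : G.Walk u u}
    (hc : c.IsCycle) (hodd : Odd c.length) (hx : x ∈ DSet G) (hy : y ∈ DSet G) (hxy : G.Adj x y)
    (hxc : x ∈ c.support) : s(x, y) ∈ c.edges := by
  obtain ⟨d, hd, hdodd, hxyd, -⟩ := exists_isCycle_odd_of_adj_of_mem_DSet hx hy hxy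
  have hsupp := hG.support_eq hc hodd hd hdodd hxc (d.fst_mem_support_of_mem_edges hxyd)
  have hyc : y ∈ {v | v ∈ c.support} := hsupp ▸ d.snd_mem_support_of_mem_edges hxyd
  exact hG.mem_edges_of_adj hc hodd hxy hxc hyc

end OddCycleDisjoint

theorem Walk.mem_support_iff_reachable {H : SimpleGraph W} {a b : W} (c : H.Walk a b)
    (hc : ∀ x y, H.Adj x y → x ∈ c.support → s(x, y) ∈ c.edges) (v : W) :
    v ∈ c.support ↔ H.Reachable a v := by
  classical
  have closed : ∀ x (q : H.Walk x v), x ∈ c.support → v ∈ c.support := by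
    intro x q
    induction q with
    | nil => exact id
    | cons h _ ih => exact fun hx => ih (c.snd_mem_support_of_mem_edges (hc _ _ h hx))
  exact ⟨fun hv => ⟨c.takeUntil v hv⟩, fun ⟨q⟩ => closed a q c.start_mem_support⟩

theorem ConnectedComponent.supp_eq_singleton {H : SimpleGraph W} {x : W}
    (hx : ∀ y, ¬ H.Adj x y) : (H.connectedComponentMk x).supp = {x} := by
  ext y
  rw [ConnectedComponent.mem_supp_iff, ConnectedComponent.eq, Set.mem_singleton_iff]
  refine ⟨fun ⟨q⟩ => ?_, fun h => h ▸ Reachable.refl y⟩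
  cases q.reverse with
  | nil => rfl
  | cons h _ => exact absurd h (hx _)

@[simp]
theorem Walk.length_induce (w : G.Walk u v) (hw : ∀ x ∈ w.support, x ∈ S) :
    (w.induce S hw).length = w.length := by
  induction w with
  | nil => rfl
  | cons _ _ ih => simp [ih]

theorem Walk.mem_support_induce_iff (w : G.Walk u v) (hw : ∀ x ∈ w.support, x ∈ S) {a : S} :
    a ∈ (w.induce S hw).support ↔ (a : V) ∈ w.support := by
  simp [support_induce]

theorem Walk.mem_edges_induce_iff (w : G.Walk u v) (hw : ∀ x ∈ w.support, x ∈ S) {a b : S} :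
    s(a, b) ∈ (w.induce S hw).edges ↔ s((a : V), (b : V)) ∈ w.edges := by
  induction w with
  | nil => simp
  | cons _ _ ih => simp [ih, Subtype.ext_iff]

theorem Walk.IsCycle.induce {c : G.Walk u u} (hc : c.IsCycle) (hw : ∀ x ∈ c.support, x ∈ S) :
    (c.induce S hw).IsCycle := by
  rwa [← isCycle_map_iff_of_injective (f := (Embedding.induce S).toHom) Subtype.val_injective,
    map_induce]

end SimpleGraph

/-- In an odd-cycle-disjoint graph, every connected component of `G[D(G)]` is a
single vertex or an odd cycle. -/
theorem stmt_5 {V : Type u} [Fintype V] (G : SimpleGraph V)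
    (hdisj : ∀ C C' : Set V, IsOddCycle G C → IsOddCycle G C' → C ≠ C' → C ∩ C' = ∅) :
    ∀ K : (G.induce (DSet G)).ConnectedComponent,
      (∃ v, K.supp = {v}) ∨
      (∃ (u : ↥(DSet G)) (w : (G.induce (DSet G)).Walk u u),
        w.IsCycle ∧ Odd w.length ∧ (∀ v, v ∈ w.support ↔ v ∈ K.supp) ∧
        ∀ a b : ↥(DSet G), (G.induce (DSet G)).Adj a b → a ∈ K.supp → s(a, b) ∈ w.edges) := by
  intro K
  induction K using ConnectedComponent.ind with | h x => ?_
  by_cases hx : ∃ b, (G.induce (DSet G)).Adj x b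
  swap
  · exact .inl ⟨x, ConnectedComponent.supp_eq_singleton (not_exists.mp hx)⟩
  obtain ⟨b, hxb⟩ := hx
  have hG : OddCycleDisjoint G := hdisj
  obtain ⟨c, hc, hodd, -, hcD⟩ := exists_isCycle_odd_of_adj_of_mem_DSet x.2 b.2 hxb
  have hclosed : ∀ a a' : DSet G, (G.induce (DSet G)).Adj a a' →
      a ∈ (c.induce _ hcD).support → s(a, a') ∈ (c.induce _ hcD).edges := fun a a' h ha =>
    (Walk.mem_edges_induce_iff ..).mpr <|
      hG.mem_edges_of_adj_of_mem_DSet hc hodd a.2 a'.2 h ((Walk.mem_support_induce_iff ..).mp ha)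
  have hsupp : ∀ v, v ∈ (c.induce _ hcD).support ↔
      v ∈ ((G.induce (DSet G)).connectedComponentMk x).supp := by
    intro v
    rw [Walk.mem_support_iff_reachable _ hclosed, ConnectedComponent.mem_supp_iff,
      ConnectedComponent.connectedComponentMk_eq_of_adj hxb, ConnectedComponent.eq]
    exact reachable_comm
  exact .inr ⟨_, _, hc.induce hcD, by rwa [Walk.length_induce], hsupp,
    fun a a' h ha => hclosed a a' h ((hsupp a).mpr ha)⟩
end

section
/- Let G be a finite simple graph and M a maximum matching. For every vertex x in D(G) (the set of vertices missed by some maximum matching), either M leaves x unsaturated, or there exists an M-alternating path starting at x with a matched edge and ending at a vertex unsaturated by M. -/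
open SimpleGraph

universe u

variable {V : Type u}

/-!
Let `M'` be a maximum matching missing `x`, and follow from `x` a path in the symmetric
difference `M ∆ M'` that cannot be extended. Since `M` and `M'` are matchings, such a path
alternates, and its first edge lies in `M` because `x` is `M'`-unsaturated. Its last vertex `y`
has no other neighbour in `M ∆ M'`, so `y` misses `M` or `M'`. If `y` missed `M'`, the path
would be `M'`-augmenting: exchanging its edges would give a matching covering two more vertices,
hence with one more edge. So `y` misses `M`.
-/

open scoped symmDiff

namespace SimpleGraph

variable {G : SimpleGraph V}

theorem Subgraph.IsMatching.ncard_verts_eq_two_mul [Finite V] {M : G.Subgraph}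
    (hM : M.IsMatching) : M.verts.ncard = 2 * M.edgeSet.ncard := by
  classical
  have := Fintype.ofFinite V
  have hsupp : M.spanningCoe.support = M.verts := hM.support_eq_verts
  have hdeg : ∀ v ∈ M.spanningCoe.support.toFinset, M.spanningCoe.degree v = 1 := by
    intro v hv
    rw [Set.mem_toFinset, hsupp] at hv
    rw [Subgraph.degree_spanningCoe]
    exact Subgraph.isMatching_iff_forall_degree.mp hM v hv
  have h := M.spanningCoe.sum_degrees_support_eq_twice_card_edges
  rwa [Finset.sum_congr rfl hdeg, Finset.sum_const, smul_eq_mul, mul_one,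
    ← Set.ncard_eq_toFinset_card', hsupp, ← Set.ncard_coe_finset, coe_edgeFinset,
    Subgraph.edgeSet_spanningCoe] at h

theorem exists_isPath_forall_adj_mem_support [Finite V] (H : SimpleGraph V) (x : V) :
    ∃ (y : V) (p : H.Walk x y), p.IsPath ∧ ∀ z, H.Adj y z → z ∈ p.support := by
  by_contra! h
  have hlong : ∀ n, ∃ (y : V) (p : H.Walk x y), p.IsPath ∧ p.length = n := by
    intro n
    induction n with
    | zero => exact ⟨x, .nil, .nil, rfl⟩
    | succ n ih =>
      obtain ⟨y, p, hp, rfl⟩ := ih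
      obtain ⟨z, hyz, hz⟩ := h y p hp
      exact ⟨z, p.concat hyz, hp.concat hz hyz, p.length_concat hyz⟩
  have := Fintype.ofFinite V
  obtain ⟨y, p, hp, hlen⟩ := hlong (Fintype.card V)
  exact hp.length_lt.ne hlen

namespace Subgraph

variable {M M' : G.Subgraph} {H : SimpleGraph V} {x y u v w : V}

theorem adj_iff_not_adj_of_le_sup (hM : M.IsMatching) (hM' : M'.IsMatching)
    (hH : H ≤ M.spanningCoe ⊔ M'.spanningCoe) (hu : H.Adj v u) (hw : H.Adj v w)
    (huw : u ≠ w) :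
    M.Adj v u ↔ ¬ M.Adj v w := by
  refine ⟨fun hvu hvw => huw (hM.eq_of_adj_left hvu hvw), fun hvw => ?_⟩
  have hvw' : M'.Adj v w := (hH hw).resolve_left hvw
  exact (hH hu).resolve_right fun hvu' => huw (hM'.eq_of_adj_left hvu' hvw')

theorem alternating_edges_of_le_sup (hM : M.IsMatching) (hM' : M'.IsMatching)
    (hH : H ≤ M.spanningCoe ⊔ M'.spanningCoe) {p : H.Walk x y} (hp : p.IsPath) :
    Alternating G M p.edges := by
  induction p with
  | nil => exact List.isChain_nil
  | @cons u v _ h q ih =>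
    cases q with
    | nil => exact List.isChain_singleton _
    | @cons _ w _ h' q =>
      rw [Walk.cons_isPath_iff] at hp
      have hne : u ≠ w := by rintro rfl; exact hp.2 (by simp)
      refine List.isChain_cons_cons.mpr ⟨?_, ih hp.1⟩
      show s(u, v) ∈ M.edgeSet ↔ s(v, w) ∉ M.edgeSet
      simp only [Subgraph.mem_edgeSet]
      rw [M.adj_comm]
      exact adj_iff_not_adj_of_le_sup hM hM' hH h.symm h' hne

theorem exists_toSubgraph_adj_of_ne (hM : M.IsMatching) (hM' : M'.IsMatching)
    (hH : H ≤ M.spanningCoe ⊔ M'.spanningCoe) {p : H.Walk x y} (hp : p.IsPath)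
    (hv : v ∈ p.support) (hvx : v ≠ x) (hvy : v ≠ y) :
    ∃ u, p.toSubgraph.Adj v u ∧ M.Adj v u := by
  obtain ⟨i, rfl, hi⟩ := Walk.mem_support_iff_exists_getVert.mp hv
  have hi0 : i ≠ 0 := by rintro rfl; exact hvx p.getVert_zero
  have hil : i < p.length := hi.lt_of_ne (by rintro rfl; exact hvy p.getVert_length)
  obtain ⟨a, b, hab, hnbr⟩ :=
    Set.ncard_eq_two.mp (hp.ncard_neighborSet_toSubgraph_internal_eq_two hi0 hil)
  have ha : p.toSubgraph.Adj (p.getVert i) a := by rw [← mem_neighborSet, hnbr]; simp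
  have hb : p.toSubgraph.Adj (p.getVert i) b := by rw [← mem_neighborSet, hnbr]; simp
  by_cases hMa : M.Adj (p.getVert i) a
  · exact ⟨a, ha, hMa⟩
  · have hMab := adj_iff_not_adj_of_le_sup hM hM' hH ha.adj_sub hb.adj_sub hab
    exact ⟨b, hb, not_not.mp (hMab.not.mp hMa)⟩

theorem toSubgraph_adj_of_ne (hM : M.IsMatching) (hM' : M'.IsMatching)
    (hH : H ≤ M.spanningCoe ⊔ M'.spanningCoe) {p : H.Walk x y} (hp : p.IsPath)
    (hv : v ∈ p.support) (hvx : v ≠ x) (hvy : v ≠ y) (hvu : M.Adj v u) :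
    p.toSubgraph.Adj v u := by
  obtain ⟨w, hvw, hMvw⟩ := exists_toSubgraph_adj_of_ne hM hM' hH hp hv hvx hvy
  rwa [hM.eq_of_adj_left hvu hMvw]

theorem adj_snd_of_notMem_verts (hH : H ≤ M.spanningCoe ⊔ M'.spanningCoe) {p : H.Walk x y}
    (hp : ¬ p.Nil) (hx : x ∉ M'.verts) : M.Adj x p.snd :=
  (hH (p.adj_snd hp)).resolve_right fun h => hx h.fst_mem

theorem exists_toSubgraph_adj_of_mem_support (hM : M.IsMatching) (hM' : M'.IsMatching)
    (hH : H ≤ M.spanningCoe ⊔ M'.spanningCoe) {p : H.Walk x y} (hp : p.IsPath) (hnil : ¬ p.Nil)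
    (hx : x ∉ M'.verts) (hy : y ∉ M'.verts) (hv : v ∈ p.support) :
    ∃ u, p.toSubgraph.Adj v u ∧ M.Adj v u := by
  by_cases hvx : v = x
  · subst hvx
    exact ⟨p.snd, p.toSubgraph_adj_snd hnil, adj_snd_of_notMem_verts hH hnil hx⟩
  by_cases hvy : v = y
  · subst hvy
    refine ⟨p.penultimate, (p.toSubgraph_adj_penultimate hnil).symm, ?_⟩
    simpa using adj_snd_of_notMem_verts hH (p := p.reverse) (by simpa using hnil) hy
  exact exists_toSubgraph_adj_of_ne hM hM' hH hp hv hvx hvy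

theorem exists_isMatching_ncard_edgeSet_gt [Finite V] (hM : M.IsMatching) (hM' : M'.IsMatching)
    (hH : H ≤ M.spanningCoe ⊔ M'.spanningCoe) {p : H.Walk x y} (hp : p.IsPath) (hnil : ¬ p.Nil)
    (hx : x ∉ M'.verts) (hy : y ∉ M'.verts) :
    ∃ N : G.Subgraph, N.IsMatching ∧ M'.edgeSet.ncard < N.edgeSet.ncard := by
  have hH' : H ≤ M'.spanningCoe ⊔ M.spanningCoe := hH.trans_eq (sup_comm _ _)
  -- `M'` with the edges of `p` exchanged; it covers `M'.verts ∪ {x, y}`.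
  let N : G.Subgraph :=
    { verts := M'.verts ∪ {v | v ∈ p.support}
      Adj a b := p.toSubgraph.Adj a b ∧ M.Adj a b ∨ ¬ p.toSubgraph.Adj a b ∧ M'.Adj a b
      adj_sub := by rintro a b (⟨-, h⟩ | ⟨-, h⟩) <;> exact h.adj_sub
      edge_vert := by
        rintro a b (⟨h, -⟩ | ⟨-, h⟩)
        · exact Or.inr (p.mem_support_of_adj_toSubgraph h)
        · exact Or.inl h.fst_mem
      symm := ⟨fun a b => by
        simp only [p.toSubgraph.adj_comm a b, M.adj_comm a b, M'.adj_comm a b, imp_self]⟩ }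
  have hN : N.IsMatching := by
    intro v hvN
    by_cases hv : v ∈ p.support
    · obtain ⟨u, hPvu, hMvu⟩ := exists_toSubgraph_adj_of_mem_support hM hM' hH hp hnil hx hy hv
      refine ⟨u, Or.inl ⟨hPvu, hMvu⟩, ?_⟩
      rintro u' (⟨-, h⟩ | ⟨hP, h⟩)
      · exact hM.eq_of_adj_left h hMvu
      · have hvx : v ≠ x := by rintro rfl; exact hx h.fst_mem
        have hvy : v ≠ y := by rintro rfl; exact hy h.fst_mem
        exact absurd (toSubgraph_adj_of_ne hM' hM hH' hp hv hvx hvy h) hP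
    · obtain ⟨u, hu, -⟩ := hM' (hvN.resolve_right hv)
      have hnot : ∀ w, ¬ p.toSubgraph.Adj v w :=
        fun w h => hv (p.mem_support_of_adj_toSubgraph h)
      refine ⟨u, Or.inr ⟨hnot u, hu⟩, ?_⟩
      rintro u' (⟨h, -⟩ | ⟨-, h⟩)
      · exact absurd h (hnot u')
      · exact hM'.eq_of_adj_left h hu
  refine ⟨N, hN, ?_⟩
  have hxy : x ≠ y := by
    rintro rfl
    exact hnil (Walk.isPath_iff_nil.mp hp)
  have hsub : insert x (insert y M'.verts) ⊆ N.verts := by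
    rintro v (rfl | rfl | hv)
    · exact Or.inr p.start_mem_support
    · exact Or.inr p.end_mem_support
    · exact Or.inl hv
  have hcard := Set.ncard_le_ncard hsub (Set.toFinite _)
  rw [Set.ncard_insert_of_notMem (by simp [hxy, hx]), Set.ncard_insert_of_notMem hy,
    hM'.ncard_verts_eq_two_mul, hN.ncard_verts_eq_two_mul] at hcard
  omega

theorem head?_edges_mem_edgeSet (hH : H ≤ M.spanningCoe ⊔ M'.spanningCoe) (p : H.Walk x y)
    (hx : x ∉ M'.verts) : ∀ e ∈ p.edges.head?, e ∈ M.edgeSet := by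
  cases p with
  | nil => simp
  | cons h q => simpa using (hH h).resolve_right fun h' => hx h'.fst_mem

theorem exists_symmDiff_adj_ne (hM : M.IsMatching) (hM' : M'.IsMatching) (hvM : v ∈ M.verts)
    (hvM' : v ∈ M'.verts) (hvw : (M.spanningCoe ∆ M'.spanningCoe).Adj v w) :
    ∃ u ≠ w, (M.spanningCoe ∆ M'.spanningCoe).Adj v u := by
  rcases hvw with ⟨hw, hw'⟩ | ⟨hw', hw⟩
  · obtain ⟨u, hu, -⟩ := hM' hvM'
    refine ⟨u, fun huw => hw' (huw ▸ hu), Or.inr ⟨hu, fun h => hw' ?_⟩⟩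
    rwa [hM.eq_of_adj_left hw h]
  · obtain ⟨u, hu, -⟩ := hM hvM
    refine ⟨u, fun huw => hw (huw ▸ hu), Or.inl ⟨hu, fun h => hw ?_⟩⟩
    rwa [hM'.eq_of_adj_left hw' h]

theorem exists_isPath_symmDiff_notMem_verts [Finite V] (hM : M.IsMatching)
    (hM' : M'.IsMatching)
    (hmax : ∀ N : G.Subgraph, N.IsMatching → N.edgeSet.ncard ≤ M'.edgeSet.ncard)
    (hxM : x ∈ M.verts) (hxM' : x ∉ M'.verts) :
    ∃ (y : V) (p : (M.spanningCoe ∆ M'.spanningCoe).Walk x y), p.IsPath ∧ y ∉ M.verts := by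
  set H := M.spanningCoe ∆ M'.spanningCoe
  have hH : H ≤ M.spanningCoe ⊔ M'.spanningCoe := symmDiff_le_sup
  have hH' : H ≤ M'.spanningCoe ⊔ M.spanningCoe := hH.trans_eq (sup_comm _ _)
  obtain ⟨y, p, hp, hend⟩ := exists_isPath_forall_adj_mem_support H x
  obtain ⟨u, hxu, -⟩ := hM hxM
  have hnil : ¬ p.Nil := by
    intro hnil
    obtain rfl := hnil.eq
    have hu := hend u (Or.inl ⟨hxu, fun h => hxM' h.fst_mem⟩)
    rw [Walk.eq_nil_iff_nil.mpr hnil, Walk.support_nil, List.mem_singleton] at hu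
    exact hxu.ne hu.symm
  have hy_nbr : ∀ z, H.Adj y z → z = p.penultimate := by
    intro z hyz
    suffices p.toSubgraph.Adj z y by
      rw [← Set.mem_singleton_iff, ← hp.neighborSet_toSubgraph_endpoint hnil]
      exact this.symm
    by_cases hzx : z = x
    · subst hzx
      have hMzy : M.Adj z y := (hH hyz.symm).resolve_right fun h => hxM' h.fst_mem
      simpa [hM.eq_of_adj_left (adj_snd_of_notMem_verts hH hnil hxM') hMzy]
        using p.toSubgraph_adj_snd hnil
    · rcases hH hyz.symm with h | h
      · exact toSubgraph_adj_of_ne hM hM' hH hp (hend z hyz) hzx hyz.ne' h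
      · exact toSubgraph_adj_of_ne hM' hM hH' hp (hend z hyz) hzx hyz.ne' h
  refine ⟨y, p, hp, fun hyM => ?_⟩
  have hyM' : y ∈ M'.verts := by
    by_contra hyM'
    obtain ⟨N, hN, hlt⟩ := exists_isMatching_ncard_edgeSet_gt hM hM' hH hp hnil hxM' hyM'
    exact (hmax N hN).not_gt hlt
  obtain ⟨z, hz, hyz⟩ := exists_symmDiff_adj_ne hM hM' hyM hyM' (p.adj_penultimate hnil).symm
  exact hz (hy_nbr z hyz)

end Subgraph

end SimpleGraph

/-- For a maximum matching `M` and `x ∈ D(G)`: either `x` is `M`-unsaturated, or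
there is an `M`-alternating path from `x` starting with a matched edge and
ending at an `M`-unsaturated vertex. -/
theorem stmt_6 {V : Type u} [Fintype V] (G : SimpleGraph V) (M : G.Subgraph)
    (hM : IsMaxMatching G M) (x : V) (hx : x ∈ DSet G) :
    x ∉ M.verts ∨
    ∃ (y : V) (p : G.Walk x y), p.IsPath ∧ Alternating G M p.edges ∧
      (∀ e ∈ p.edges.head?, e ∈ M.edgeSet) ∧ y ∉ M.verts := by
  obtain ⟨M', ⟨hM', hmax⟩, hxM'⟩ := hx
  by_cases hxM : x ∈ M.verts
  · obtain ⟨y, p, hp, hy⟩ :=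
      Subgraph.exists_isPath_symmDiff_notMem_verts hM.1 hM' hmax hxM hxM'
    have hle : M.spanningCoe ∆ M'.spanningCoe ≤ G :=
      symmDiff_le_sup.trans (sup_le M.spanningCoe_le M'.spanningCoe_le)
    refine Or.inr ⟨y, p.mapLe hle, hp.mapLe hle, ?_, ?_, hy⟩ <;> rw [Walk.edges_mapLe_eq_edges]
    · exact Subgraph.alternating_edges_of_le_sup hM.1 hM' symmDiff_le_sup hp
    · exact Subgraph.head?_edges_mem_edgeSet symmDiff_le_sup p hxM'
  · exact Or.inl hxM
end

section
/- If G is an R-disjoint graph, then corona(G) ∪ N(core(G)) = V(G), i.e., every vertex of G either lies in some maximum independent set or is adjacent to a vertex lying in all maximum independent sets. -/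
/-!
Each odd cycle of an `R`-disjoint graph lies in its own reach set, so distinct odd cycles are
vertex-disjoint. Suppose `v` is neither in `corona G` nor adjacent to `core G`, and pick a maximum
independent set `S` meeting `N(v)` in as few vertices as possible. Then `v` has two neighbours
`u₁ ≠ u₂` in `S`. Each `uᵢ` is missed by some maximum independent set `S'`; exchanging `S` and
`S'` on the component of `uᵢ` in `G[S ∆ S']` and using the minimality of `S` yields an odd path
from `uᵢ` to a neighbour `xᵢ ∉ S` of `v` avoiding `v`, hence an odd cycle through `v`. The two
cycles through `v` coincide, so `u₂` lies on the cycle `v u₁ ⋯ x₁ v`, and splitting it at `u₂`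
gives a different odd cycle through `v`.
-/

open SimpleGraph

universe u

variable {V : Type u}

variable {G : SimpleGraph V}

lemma isIndep_empty (G : SimpleGraph V) : IsIndep G ∅ := fun _ h => h.elim

lemma IsIndep.insert_diff {S W : Set V} {v : V} (hS : IsIndep G S)
    (hv : ∀ u ∈ S, G.Adj v u → u ∈ W) : IsIndep G (insert v (S \ W)) := by
  rintro a (rfl | ⟨haS, haW⟩) b (rfl | ⟨hbS, hbW⟩) hab
  · exact G.loopless.irrefl _ hab
  · exact hbW (hv b hbS hab)
  · exact haW (hv a haS hab.symm)
  · exact hS haS hbS hab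

lemma exists_isMaxIndep [Finite V] (G : SimpleGraph V) : ∃ S, IsMaxIndep G S := by
  obtain ⟨S, hS, hmax⟩ := Set.exists_max_image {S | IsIndep G S} Set.ncard (Set.toFinite _)
    ⟨∅, isIndep_empty G⟩
  exact ⟨S, hS, hmax⟩

lemma exists_isMaxIndep_forall_ncard_inter_le [Finite V] (G : SimpleGraph V) (A : Set V) :
    ∃ S, IsMaxIndep G S ∧ ∀ T, IsMaxIndep G T → (A ∩ S).ncard ≤ (A ∩ T).ncard :=
  Set.exists_min_image {S | IsMaxIndep G S} (fun S => (A ∩ S).ncard) (Set.toFinite _)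
    (exists_isMaxIndep G)

lemma notMem_of_notMem_corona {v : V} {S : Set V} (hv : v ∉ corona G) (hS : IsMaxIndep G S) :
    v ∉ S :=
  fun hvS => hv ⟨S, hS, hvS⟩

/-- Otherwise trading the unique neighbour of `v` in `S` (or any vertex of `S`, if there is
none) for `v` gives a maximum independent set containing `v`. -/
lemma exists_adj_adj_of_notMem_corona [Finite V] {v : V} {S : Set V} (hv : v ∉ corona G)
    (hS : IsMaxIndep G S) :
    ∃ u₁ u₂, u₁ ≠ u₂ ∧ u₁ ∈ S ∧ u₂ ∈ S ∧ G.Adj v u₁ ∧ G.Adj v u₂ := by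
  by_contra! h
  obtain ⟨w, hwS, hw⟩ : ∃ w ∈ S, ∀ u ∈ S, G.Adj v u → u ∈ ({w} : Set V) := by
    by_cases hN : ∃ u ∈ S, G.Adj v u
    · obtain ⟨u, huS, hvu⟩ := hN
      exact ⟨u, huS, fun u' hu'S hvu' =>
        by_contra fun hne => h u u' (Ne.symm hne) huS hu'S hvu hvu'⟩
    · have hcard : 1 ≤ S.ncard := Set.ncard_singleton v ▸
        hS.2 {v} fun a ha b hb hab => by rw [ha, hb] at hab; exact G.loopless.irrefl _ hab
      obtain ⟨w, hwS⟩ := Set.nonempty_of_ncard_ne_zero (s := S) (by omega)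
      exact ⟨w, hwS, fun u huS hvu => absurd ⟨u, huS, hvu⟩ hN⟩
  have hmax : IsMaxIndep G (insert v (S \ {w})) := by
    refine ⟨hS.1.insert_diff hw, fun T hT => ?_⟩
    rw [Set.ncard_insert_of_notMem fun h => notMem_of_notMem_corona hv hS h.1,
      Set.ncard_sdiff_singleton_add_one hwS]
    exact hS.2 T hT
  exact hv ⟨_, hmax, Set.mem_insert _ _⟩

def reachableWithin (G : SimpleGraph V) (D : Set V) (u : V) : Set V :=
  {y | ∃ w : G.Walk u y, ∀ z ∈ w.support, z ∈ D}

lemma mem_reachableWithin_self {D : Set V} {u : V} (hu : u ∈ D) : u ∈ reachableWithin G D u :=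
  ⟨.nil, by simpa using hu⟩

lemma mem_reachableWithin_of_adj {D : Set V} {u y z : V} (hy : y ∈ reachableWithin G D u)
    (hyz : G.Adj y z) (hz : z ∈ D) : z ∈ reachableWithin G D u := by
  obtain ⟨w, hw⟩ := hy
  refine ⟨w.concat hyz, fun t ht => ?_⟩
  rw [Walk.support_concat, List.mem_append, List.mem_singleton] at ht
  exact ht.elim (hw t) (· ▸ hz)

lemma IsIndep.swap {S S' K : Set V} (hS : IsIndep G S) (hS' : IsIndep G S')
    (hK : ∀ y ∈ K, ∀ z, G.Adj y z → z ∈ symmDiff S S' → z ∈ K) :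
    IsIndep G ((S \ K) ∪ (S' ∩ K)) := by
  rintro p (⟨hpS, hpK⟩ | ⟨hpS', hpK⟩) q (⟨hqS, hqK⟩ | ⟨hqS', hqK⟩) hpq
  · exact hS hpS hqS hpq
  · by_cases hpS' : p ∈ S'
    · exact hS' hpS' hqS' hpq
    · exact hpK (hK q hqK p hpq.symm (Set.mem_symmDiff.mpr (.inl ⟨hpS, hpS'⟩)))
  · by_cases hqS' : q ∈ S'
    · exact hS' hpS' hqS' hpq
    · exact hqK (hK p hpK q hpq (Set.mem_symmDiff.mpr (.inl ⟨hqS, hqS'⟩)))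
  · exact hS' hpS' hqS' hpq

/-- `K` is a union of components of `G[S ∆ S']`. The opposite swap is independent too, and the
two swaps together have `|S| + |S'|` vertices. -/
lemma IsMaxIndep.swap [Finite V] {S S' K : Set V} (hS : IsMaxIndep G S) (hS' : IsMaxIndep G S')
    (hK : ∀ y ∈ K, ∀ z, G.Adj y z → z ∈ symmDiff S S' → z ∈ K) :
    IsMaxIndep G ((S \ K) ∪ (S' ∩ K)) := by
  have hswap' := hS'.1.swap hS.1 (by simpa only [symmDiff_comm] using hK)
  refine ⟨hS.1.swap hS'.1 hK, fun T hT => ?_⟩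
  have h₁ := hS.2 T hT
  have h₂ := hS.2 S' hS'.1
  have h₃ := hS'.2 _ hswap'
  rw [Set.ncard_union_eq (Set.disjoint_sdiff_left.mono_right Set.inter_subset_right)] at h₃ ⊢
  have hS_split := Set.ncard_inter_add_ncard_sdiff_eq_ncard S K
  have hS'_split := Set.ncard_inter_add_ncard_sdiff_eq_ncard S' K
  omega

lemma IsIndep.even_length_iff {S S' : Set V} (hS : IsIndep G S) (hS' : IsIndep G S') {x y : V}
    (w : G.Walk x y) (hw : ∀ z ∈ w.support, z ∈ symmDiff S S') :
    Even w.length ↔ (x ∈ S ↔ y ∈ S) := by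
  induction w with
  | nil => simp
  | @cons a b c hab p ih =>
    simp only [Walk.support_cons, List.mem_cons, forall_eq_or_imp] at hw
    have hb := hw.2 b p.start_mem_support
    have hstep : a ∈ S ↔ b ∉ S := by
      refine ⟨fun haS hbS => hS haS hbS hab, fun hbS => ?_⟩
      rcases Set.mem_symmDiff.mp hw.1 with ⟨haS, -⟩ | ⟨haS', -⟩
      · exact haS
      · rcases Set.mem_symmDiff.mp hb with ⟨hbS', -⟩ | ⟨hbS', -⟩
        · exact absurd hbS' hbS
        · exact absurd hab (hS' haS' hbS')
    rw [Walk.length_cons, Nat.even_add_one, ih hw.2]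
    tauto

/-- Minimality of `S` against its swap with `S'` on the component `K` of `u` in `G[S ∆ S']`
puts a neighbour `x` of `v` in `S' ∩ K`; a path from `u` to `x` inside `K` alternates between
`S` and `S'`, so it is odd. -/
lemma exists_odd_path_of_notMem_core [Finite V] {v u : V} {S : Set V} (hv : v ∉ corona G)
    (hS : IsMaxIndep G S)
    (hmin : ∀ T, IsMaxIndep G T → (G.neighborSet v ∩ S).ncard ≤ (G.neighborSet v ∩ T).ncard)
    (huS : u ∈ S) (hvu : G.Adj v u) (hu : u ∉ core G) :
    ∃ x, x ∉ S ∧ G.Adj v x ∧ ∃ P : G.Walk u x, P.IsPath ∧ Odd P.length ∧ v ∉ P.support := by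
  classical
  obtain ⟨S', hS', huS'⟩ : ∃ S', IsMaxIndep G S' ∧ u ∉ S' := by
    simpa only [core, Set.mem_sInter, Set.mem_ofPred_eq, not_forall, exists_prop] using hu
  set K := reachableWithin G (symmDiff S S') u
  have huK : u ∈ K := mem_reachableWithin_self (Set.mem_symmDiff.mpr (.inl ⟨huS, huS'⟩))
  have hT := hS.swap hS' (K := K) fun y hy z => mem_reachableWithin_of_adj hy
  obtain ⟨x, hxS', hxK, hvx⟩ : ∃ x ∈ S', x ∈ K ∧ G.Adj v x := by
    by_contra! hno
    refine (hmin _ hT).not_gt (Set.ncard_lt_ncard ?_)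
    refine Set.ssubset_iff_of_subset ?_ |>.mpr ⟨u, ⟨hvu, huS⟩, fun h => ?_⟩
    · rintro z ⟨hvz, ⟨hzS, -⟩ | ⟨hzS', hzK⟩⟩
      · exact ⟨hvz, hzS⟩
      · exact absurd hvz (hno z hzS' hzK)
    · rcases h.2 with ⟨-, huK'⟩ | ⟨huS'', -⟩
      · exact huK' huK
      · exact huS' huS''
  obtain ⟨w, hw⟩ := hxK
  have hwD : ∀ z ∈ w.bypass.support, z ∈ symmDiff S S' :=
    fun z hz => hw z (w.support_bypass_subset_support hz)
  have hxS : x ∉ S := fun hxS => by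
    rcases Set.mem_symmDiff.mp (hw x w.end_mem_support) with ⟨-, h⟩ | ⟨-, h⟩ <;> contradiction
  refine ⟨x, hxS, hvx, w.bypass, w.bypass_isPath, ?_, fun hvw => ?_⟩
  · exact Nat.not_even_iff_odd.mp fun he =>
      hxS (((hS.1.even_length_iff hS'.1 _ hwD).mp he).mp huS)
  · rcases Set.mem_symmDiff.mp (hwD v hvw) with ⟨h, -⟩ | ⟨h, -⟩
    · exact notMem_of_notMem_corona hv hS h
    · exact notMem_of_notMem_corona hv hS' h

lemma isOddCycle_insert_support {v a b : V} {P : G.Walk a b} (hP : P.IsPath)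
    (hodd : Odd P.length) (hv : v ∉ P.support) (ha : G.Adj v a) (hb : G.Adj v b) :
    IsOddCycle G (insert v {z | z ∈ P.support}) := by
  have hab : a ≠ b := by
    rintro rfl
    rw [(Walk.isPath_iff_nil.mp hP).length_eq_zero] at hodd
    exact Nat.not_odd_zero hodd
  refine ⟨v, .cons ha (P.concat hb.symm), ?_, ?_, fun z => ?_⟩
  · rw [Walk.cons_isCycle_iff, Walk.edges_concat, List.concat_eq_append]
    refine ⟨hP.concat hv hb.symm, fun h => ?_⟩
    rcases List.mem_append.mp h with h | h
    · exact hv (P.fst_mem_support_of_mem_edges h)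
    · rcases Sym2.eq_iff.mp (List.mem_singleton.mp h) with ⟨h, -⟩ | ⟨-, h⟩
      · exact hb.ne h
      · exact hab h
  · rw [Walk.length_cons, Walk.length_concat]
    exact hodd.add_even even_two
  · simp only [Walk.support_cons, Walk.support_concat, List.mem_cons, List.mem_append,
      Set.mem_insert_iff, Set.mem_ofPred_eq]
    tauto

lemma subset_reach_of_nonempty {C : Set V} (hC : (reach G C).Nonempty) : C ⊆ reach G C := by
  obtain ⟨-, F, ⟨M, hM, hF⟩, -⟩ := hC
  intro c hc
  refine ⟨F, ⟨M, hM, hF⟩, ?_⟩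
  obtain ⟨b, r, w, p, -, -, hwC, -, rfl⟩ := hF
  exact Or.inl ((hwC c).2 hc)

lemma RDisjoint.pairwiseDisjoint_isOddCycle (h : RDisjoint G) :
    {C | IsOddCycle G C}.PairwiseDisjoint id := fun C hC C' hC' hne =>
  (Set.disjoint_iff_inter_eq_empty.mpr (h.2.2 C C' hC hC' hne)).mono
    (subset_reach_of_nonempty (h.2.1 C hC)) (subset_reach_of_nonempty (h.2.1 C' hC'))

section PairwiseDisjointOddCycles

variable {v a b c : V}

lemma even_length_left_of_pairwiseDisjoint (hdisj : {C | IsOddCycle G C}.PairwiseDisjoint id)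
    {t : G.Walk a c} {d : G.Walk c b} (hP : (t.append d).IsPath) (hodd : Odd (t.append d).length)
    (hv : v ∉ (t.append d).support) (ha : G.Adj v a) (hb : G.Adj v b) (hc : G.Adj v c)
    (hcb : c ≠ b) : Even t.length := by
  refine Nat.not_odd_iff_even.mp fun ht => ?_
  have hvt : v ∉ t.support := fun h => hv ((Walk.mem_support_append_iff t d).mpr (.inl h))
  have hbt : b ∉ t.support := by
    have hnd := hP.support_nodup
    rw [Walk.support_append] at hnd
    exact fun h => List.disjoint_of_nodup_append hnd h (d.end_mem_tail_support_of_ne hcb)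
  have hC := hdisj.elim_set (isOddCycle_insert_support hP.of_append_left ht hvt ha hc)
    (isOddCycle_insert_support hP hodd hv ha hb) v (Set.mem_insert _ _) (Set.mem_insert _ _)
  have hbC : b ∈ insert v {z | z ∈ (t.append d).support} := .inr (Walk.end_mem_support _)
  rw [← hC] at hbC
  rcases hbC with rfl | hbt'
  · exact hb.ne rfl
  · exact hbt hbt'

/-- An odd cycle `v a ⋯ b v` whose vertex `v` has a further neighbour `c` on it splits at `c`
into two cycles through `v`, one of them odd and missing `a` or `b`. -/
lemma eq_or_eq_of_adj_of_mem_support (hdisj : {C | IsOddCycle G C}.PairwiseDisjoint id)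
    {P : G.Walk a b} (hP : P.IsPath) (hodd : Odd P.length) (hv : v ∉ P.support)
    (ha : G.Adj v a) (hb : G.Adj v b) (hcP : c ∈ P.support) (hc : G.Adj v c) :
    c = a ∨ c = b := by
  classical
  by_contra! hne
  obtain ⟨t, d, rfl⟩ : ∃ (t : G.Walk a c) (d : G.Walk c b), P = t.append d :=
    ⟨_, _, (P.take_spec hcP).symm⟩
  have ht := even_length_left_of_pairwiseDisjoint hdisj hP hodd hv ha hb hc hne.2
  have hd := even_length_left_of_pairwiseDisjoint hdisj (t := d.reverse) (d := t.reverse)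
    (by rwa [← Walk.reverse_append, Walk.isPath_reverse_iff])
    (by rwa [← Walk.reverse_append, Walk.length_reverse])
    (by rwa [← Walk.reverse_append, Walk.support_reverse, List.mem_reverse]) hb ha hc hne.1
  rw [Walk.length_append] at hodd
  rw [Walk.length_reverse] at hd
  exact Nat.not_odd_iff_even.mpr (ht.add hd) hodd

end PairwiseDisjointOddCycles

/-- In an `R`-disjoint graph, `corona(G) ∪ N(core(G)) = V(G)`. -/
theorem stmt_12 {V : Type u} [Fintype V] (G : SimpleGraph V) (h : RDisjoint G) :
    corona G ∪ NSet G (core G) = Set.univ := by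
  have hdisj := h.pairwiseDisjoint_isOddCycle
  refine Set.eq_univ_of_forall fun v => by_contra fun hv => ?_
  obtain ⟨hvcor, hvN⟩ := not_or.mp hv
  have hcore : ∀ u, G.Adj v u → u ∉ core G := fun u hvu hu => hvN ⟨u, hu, hvu.symm⟩
  obtain ⟨S, hS, hmin⟩ := exists_isMaxIndep_forall_ncard_inter_le G (G.neighborSet v)
  obtain ⟨u₁, u₂, hne, hu₁, hu₂, hvu₁, hvu₂⟩ := exists_adj_adj_of_notMem_corona hvcor hS
  obtain ⟨x₁, hx₁, hvx₁, P₁, hP₁, hodd₁, hvP₁⟩ :=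
    exists_odd_path_of_notMem_core hvcor hS hmin hu₁ hvu₁ (hcore u₁ hvu₁)
  obtain ⟨x₂, -, hvx₂, P₂, hP₂, hodd₂, hvP₂⟩ :=
    exists_odd_path_of_notMem_core hvcor hS hmin hu₂ hvu₂ (hcore u₂ hvu₂)
  have hC := hdisj.elim_set (isOddCycle_insert_support hP₁ hodd₁ hvP₁ hvu₁ hvx₁)
    (isOddCycle_insert_support hP₂ hodd₂ hvP₂ hvu₂ hvx₂) v (Set.mem_insert _ _) (Set.mem_insert _ _)
  have hu₂C : u₂ ∈ insert v {z | z ∈ P₁.support} := hC ▸ .inr P₂.start_mem_support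
  rcases hu₂C with rfl | hu₂P₁
  · exact hvu₂.ne rfl
  rcases eq_or_eq_of_adj_of_mem_support hdisj hP₁ hodd₁ hvP₁ hvu₁ hvx₁ hu₂P₁ hvu₂ with rfl | rfl
  · exact hne rfl
  · exact hx₁ hu₂
end
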